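/- In the augmented graph G' built from a strongly connected directed graph G, let C* be a minimum-capacity (s,t)-edge-cut. If G contains a separation triple (L,S,R) with x ∈ L, |S| ≤ k, and vol^out_G(L) ≤ ν, then the capacity of C* is at most ν/ε + ν. -/

import Mathlib

open Finset ENNReal

inductive AugV (V : Type) where
  | s : AugV V
  | t : AugV V
  | inV : V → AugV V
  | outV : V → AugV V
deriving DecidableEq

variable {V : Type} [Fintype V] [DecidableEq V]

/-- The out-degree of `v` in the directed graph with edge set `E`. -/
def outDeg (E : Finset (V × V)) (v : V) : ℕ :=
  (Finset.univ.filter fun w => (v, w) ∈ E).card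

/-- The capacities of the augmented graph `G'` built from the directed graph
`G = (V,E)` with seed vertex `x` and parameters `ν, k, ε`:
edges `(v_in, v_out)` of capacity `ν/(εk)` for `v ≠ x`, edges `(v_out, w_in)`
of capacity `∞` for `(v,w) ∈ E` (there is no `x_in`), edges `(v_out, t)` of
capacity `deg^out(v)`, and the edge `(s, x_out)` of capacity `ν/ε + ν + 1`. -/
noncomputable def augCap (E : Finset (V × V)) (x : V) (ν k : ℕ) (ε : ℝ) :
    AugV V → AugV V → ℝ≥0∞
  | AugV.inV v, AugV.outV w =>
      if v = w ∧ v ≠ x then ENNReal.ofReal ((ν : ℝ) / (ε * k)) else 0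
  | AugV.outV v, AugV.inV w => if (v, w) ∈ E ∧ w ≠ x then ⊤ else 0
  | AugV.outV v, AugV.t => (outDeg E v : ℝ≥0∞)
  | AugV.s, AugV.outV v =>
      if v = x then ENNReal.ofReal ((ν : ℝ) / ε + (ν : ℝ) + 1) else 0
  | _, _ => 0

/-- The capacity of a set of edges `C` of the augmented graph. -/
noncomputable def cutCap (c : AugV V → AugV V → ℝ≥0∞)
    (C : Finset (AugV V × AugV V)) : ℝ≥0∞ :=
  ∑ e ∈ C, c e.1 e.2

/-- `C` is an `(s,t)`-edge-cut: after removing the edges of `C`, there is no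
path from `s` to `t` along edges of positive capacity. -/
def IsSTCut (c : AugV V → AugV V → ℝ≥0∞) (C : Finset (AugV V × AugV V)) : Prop :=
  ¬ Relation.ReflTransGen (fun a b => c a b ≠ 0 ∧ (a, b) ∉ C) AugV.s AugV.t

/-!
Cut the vertex edges `(v_in, v_out)` for `v ∈ S` and the sink edges `(v_out, t)` for `v ∈ L`.
From `s` one can then reach only `x_out`, the vertices `v_out` with `v ∈ L` and the vertices
`w_in` with `w ∈ L ∪ S`: an edge of `G` leaving `L` ends in `L ∪ S` since there are no
`L → R` edges, and from `w_in` one continues to `w_out` only when `w ∉ S`, i.e. `w ∈ L`.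
So the sink is cut off, at cost at most `|S| · ν/(εk) + vol^out(L) ≤ ν/ε + ν`.
-/

def sepCut (L S : Finset V) : Finset (AugV V × AugV V) :=
  S.image (fun v => (AugV.inV v, AugV.outV v)) ∪ L.image (fun v => (AugV.outV v, AugV.t))

def SourceSide (L S : Finset V) : AugV V → Prop
  | AugV.s => True
  | AugV.t => False
  | AugV.inV v => v ∈ L ∨ v ∈ S
  | AugV.outV v => v ∈ L

section Cut

variable {E : Finset (V × V)} {x : V} {ν k : ℕ} {ε : ℝ} {L S R : Finset V}

theorem sourceSide_of_edge (hcover : ∀ v : V, v ∈ L ∨ v ∈ S ∨ v ∈ R)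
    (hnoLR : ∀ e ∈ E, ¬(e.1 ∈ L ∧ e.2 ∈ R)) (hx : x ∈ L) {a b : AugV V}
    (ha : SourceSide L S a) (hab : augCap E x ν k ε a b ≠ 0) (hC : (a, b) ∉ sepCut L S) :
    SourceSide L S b := by
  cases a <;> cases b <;> simp_all [SourceSide, augCap, sepCut]
  case outV.inV v w =>
    rcases hcover w with h | h | h
    exacts [Or.inl h, Or.inr h, (hnoLR _ _ hab.1 ha h).elim]

theorem isSTCut_sepCut (hcover : ∀ v : V, v ∈ L ∨ v ∈ S ∨ v ∈ R)
    (hnoLR : ∀ e ∈ E, ¬(e.1 ∈ L ∧ e.2 ∈ R)) (hx : x ∈ L) :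
    IsSTCut (augCap E x ν k ε) (sepCut L S) := by
  intro hpath
  suffices ∀ a, Relation.ReflTransGen (fun a b => augCap E x ν k ε a b ≠ 0 ∧
      (a, b) ∉ sepCut L S) AugV.s a → SourceSide L S a from this _ hpath
  intro a h
  induction h with
  | refl => trivial
  | tail _ hedge ih => exact sourceSide_of_edge hcover hnoLR hx ih hedge.1 hedge.2

theorem cutCap_sepCut_le :
    cutCap (augCap E x ν k ε) (sepCut L S) ≤
      S.card * ENNReal.ofReal ((ν : ℝ) / (ε * k)) + ((∑ v ∈ L, outDeg E v : ℕ) : ℝ≥0∞) := by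
  have hdisj : Disjoint (S.image fun v => ((AugV.inV v : AugV V), (AugV.outV v : AugV V)))
      (L.image fun v => ((AugV.outV v : AugV V), (AugV.t : AugV V))) := by
    simp [Finset.disjoint_left]
  rw [cutCap, sepCut, Finset.sum_union hdisj, Finset.sum_image (by simp),
    Finset.sum_image (by simp), ← nsmul_eq_mul, ← Finset.sum_const, Nat.cast_sum]
  gcongr with v
  · simp only [augCap]
    split_ifs <;> simp
  · rfl

end Cut

theorem natCast_mul_ofReal_div_le {n k : ℕ} {a : ℝ} (hnk : n ≤ k) :
    (n : ℝ≥0∞) * ENNReal.ofReal (a / k) ≤ ENNReal.ofReal a := by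
  rcases k.eq_zero_or_pos with rfl | hk
  · simp
  calc (n : ℝ≥0∞) * ENNReal.ofReal (a / k) ≤ k * ENNReal.ofReal (a / k) := by gcongr
    _ = ENNReal.ofReal a := by
      rw [← ENNReal.ofReal_natCast, ← ENNReal.ofReal_mul (by positivity),
        mul_div_cancel₀ _ (by positivity)]

theorem stmt14_general (E : Finset (V × V)) (x : V) (ν k : ℕ) (ε : ℝ)
    (hε : 0 < ε)
    (L S R : Finset V)
    (hcover : ∀ v : V, v ∈ L ∨ v ∈ S ∨ v ∈ R)
    (hnoLR : ∀ e ∈ E, ¬(e.1 ∈ L ∧ e.2 ∈ R))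
    (hx : x ∈ L) (hSk : S.card ≤ k)
    (hvol : (∑ v ∈ L, outDeg E v) ≤ ν) :
    sInf {r : ℝ≥0∞ | ∃ C : Finset (AugV V × AugV V),
        IsSTCut (augCap E x ν k ε) C ∧ cutCap (augCap E x ν k ε) C = r} ≤
      ENNReal.ofReal ((ν : ℝ) / ε + (ν : ℝ)) := by
  have hS : S.card * ENNReal.ofReal ((ν : ℝ) / (ε * k)) ≤ ENNReal.ofReal ((ν : ℝ) / ε) := by
    rw [← div_div]
    exact natCast_mul_ofReal_div_le hSk
  have hL : ((∑ v ∈ L, outDeg E v : ℕ) : ℝ≥0∞) ≤ ENNReal.ofReal ν := by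
    rw [ENNReal.ofReal_natCast]
    exact_mod_cast hvol
  calc sInf _ ≤ cutCap (augCap E x ν k ε) (sepCut L S) :=
        sInf_le (by exact ⟨_, isSTCut_sepCut hcover hnoLR hx, rfl⟩)
    _ ≤ S.card * ENNReal.ofReal ((ν : ℝ) / (ε * k)) + ((∑ v ∈ L, outDeg E v : ℕ) : ℝ≥0∞) :=
        cutCap_sepCut_le
    _ ≤ ENNReal.ofReal ((ν : ℝ) / ε) + ENNReal.ofReal ν := add_le_add hS hL
    _ = ENNReal.ofReal ((ν : ℝ) / ε + ν) := (ENNReal.ofReal_add (by positivity) (by positivity)).symm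

/-- If the strongly connected directed graph `G` has a separation triple
`(L,S,R)` with `x ∈ L`, `|S| ≤ k` and `vol^out(L) ≤ ν`, then the minimum
capacity of an `(s,t)`-edge-cut of the augmented graph `G'` is at most
`ν/ε + ν`. -/
theorem stmt14 (E : Finset (V × V)) (x : V) (ν k : ℕ) (ε : ℝ)
    (hν : 0 < ν) (hk : 0 < k) (hε : 0 < ε)
    (hstrong : ∀ u v : V, Relation.ReflTransGen (fun a b => (a, b) ∈ E) u v)
    (L S R : Finset V)
    (hcover : ∀ v : V, v ∈ L ∨ v ∈ S ∨ v ∈ R)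
    (hLS : Disjoint L S) (hLR : Disjoint L R) (hSR : Disjoint S R)
    (hL : L.Nonempty) (hR : R.Nonempty)
    (hnoLR : ∀ e ∈ E, ¬(e.1 ∈ L ∧ e.2 ∈ R))
    (hx : x ∈ L) (hSk : S.card ≤ k)
    (hvol : (∑ v ∈ L, outDeg E v) ≤ ν) :
    sInf {r : ℝ≥0∞ | ∃ C : Finset (AugV V × AugV V),
        IsSTCut (augCap E x ν k ε) C ∧ cutCap (augCap E x ν k ε) C = r} ≤
      ENNReal.ofReal ((ν : ℝ) / ε + (ν : ℝ)) :=
  stmt14_general E x ν k ε hε L S R hcover hnoLR hx hSk hvol
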